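/- Let S̃ be a finite ground set, g : 2^S̃ → ℝ a set function, D̂ : S̃ → ℝ strictly positive costs, α ∈ S̃, and θ ∈ ℝ with g(S̃ \ {α}) ≥ θ. Let (i_1, …, i_K) be the sequence of elements selected by the vanilla greedy incentive search (Algorithm 3) run on the candidate set S̃ \ {α}, and set S'_k = {i_1, …, i_k} with S'_0 = ∅. Suppose that for every k ∈ {1, …, K}, (g(S'_{k−1} ∪ {α}) − g(S'_{k−1}))/D̂(α) < (g(S'_{k−1} ∪ {i_k}) − g(S'_{k−1}))/D̂(i_k). Then Algorithm 3 run on the full candidate set S̃ selects exactly the same sequence (i_1, …, i_K); in particular, α is not selected. (Claim used to verify that the critical value formula for Algorithm 3 upper-bounds the reports under which α can be selected.) -/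

import Mathlib

open Finset

variable {ι : Type*}

/-- The marginal-gain-to-cost ratio `(g(S ∪ {u}) − g(S)) / D̂(u)`. -/
noncomputable def marginalRatio [LinearOrder ι] (g : Finset ι → ℝ) (D : ι → ℝ)
    (S : Finset ι) (u : ι) : ℝ :=
  (g (insert u S) - g S) / D u

/-- The while-loop of the vanilla greedy incentive search (Algorithm 3), with fuel:
while `g(S) < θ`, add to `S` the element of `C \ S` with the largest
marginal-gain-to-cost ratio (ties broken by the linear order on `ι`), recording the
selected elements in order. -/
noncomputable def vanillaAux [LinearOrder ι] (g : Finset ι → ℝ) (D : ι → ℝ)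
    (C : Finset ι) (θ : ℝ) : ℕ → Finset ι → List ι
  | 0, _ => []
  | n + 1, S =>
    if θ ≤ g S then []
    else
      let T := C \ S
      let T' := T.filter fun u => ∀ v ∈ T, marginalRatio g D S v ≤ marginalRatio g D S u
      if h : T'.Nonempty then T'.min' h :: vanillaAux g D C θ n (insert (T'.min' h) S)
      else []

/-- The sequence of elements selected by the vanilla greedy incentive search
(Algorithm 3) on the candidate set `C` with threshold `θ`, in selection order. -/
noncomputable def vanillaSeq [LinearOrder ι] (g : Finset ι → ℝ) (D : ι → ℝ)
    (C : Finset ι) (θ : ℝ) : List ι :=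
  vanillaAux g D C θ (C.card + 1) ∅

/-- The output set of the vanilla greedy incentive search (Algorithm 3). -/
noncomputable def vanillaSearch [LinearOrder ι] (g : Finset ι → ℝ) (D : ι → ℝ)
    (C : Finset ι) (θ : ℝ) : Finset ι :=
  (vanillaSeq g D C θ).toFinset

/-!
Removing `α` from the candidates changes nothing as long as `α` is never a maximiser:
at every step of the run on `S̃ \ {α}` the candidate set of the full run is the same set
plus `α`, and a strictly dominated extra candidate does not change the set of maximisers,
hence not the tie-broken choice. The run on `S̃ \ {α}` never runs out of candidates before
reaching the threshold, because `g(S̃ \ {α}) ≥ θ`.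
-/

section

variable [LinearOrder ι] (g : Finset ι → ℝ) (D : ι → ℝ)

noncomputable def bestCandidates (S T : Finset ι) : Finset ι :=
  T.filter fun u => ∀ v ∈ T, marginalRatio g D S v ≤ marginalRatio g D S u

lemma bestCandidates_nonempty {S T : Finset ι} (hT : T.Nonempty) :
    (bestCandidates g D S T).Nonempty := by
  obtain ⟨u, hu, humax⟩ := T.exists_max_image (marginalRatio g D S) hT
  exact ⟨u, mem_filter.mpr ⟨hu, humax⟩⟩

lemma min'_bestCandidates_mem {S T : Finset ι} (h : (bestCandidates g D S T).Nonempty) :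
    (bestCandidates g D S T).min' h ∈ T :=
  (mem_filter.mp (min'_mem _ h)).1

lemma bestCandidates_insert_of_lt {S T : Finset ι} {a u : ι} (hu : u ∈ T)
    (hlt : marginalRatio g D S a < marginalRatio g D S u) :
    bestCandidates g D S (insert a T) = bestCandidates g D S T := by
  ext v
  simp only [bestCandidates, mem_filter, mem_insert, forall_eq_or_imp]
  constructor
  · rintro ⟨rfl | hv, -, hvmax⟩
    · exact absurd (hvmax u hu) (not_le.mpr hlt)
    · exact ⟨hv, hvmax⟩
  · rintro ⟨hv, hvmax⟩
    exact ⟨Or.inr hv, (hlt.trans_le (hvmax u hu)).le, hvmax⟩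

def RatioAboveAlong (a : ι) : Finset ι → List ι → Prop
  | _, [] => True
  | S, u :: l =>
    marginalRatio g D S a < marginalRatio g D S u ∧ RatioAboveAlong a (insert u S) l

lemma ratioAboveAlong_of_forall_take {a : ι} :
    ∀ {S : Finset ι} {l : List ι}, (∀ (k : ℕ) (hk : k < l.length),
      marginalRatio g D ((l.take k).toFinset ∪ S) a <
        marginalRatio g D ((l.take k).toFinset ∪ S) (l.get ⟨k, hk⟩)) →
      RatioAboveAlong g D a S l
  | _, [], _ => trivial
  | S, u :: l, h => by
    refine ⟨by simpa using h 0 (by simp), ratioAboveAlong_of_forall_take fun k hk => ?_⟩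
    simpa [insert_union, union_insert] using h (k + 1) (by simpa using hk)

variable (C : Finset ι) (θ : ℝ)

lemma vanillaAux_succ (n : ℕ) (S : Finset ι) :
    vanillaAux g D C θ (n + 1) S =
      if θ ≤ g S then []
      else if h : (bestCandidates g D S (C \ S)).Nonempty then
        (bestCandidates g D S (C \ S)).min' h ::
          vanillaAux g D C θ n (insert ((bestCandidates g D S (C \ S)).min' h) S)
      else [] :=
  rfl

lemma mem_of_mem_vanillaAux {x : ι} :
    ∀ {n : ℕ} {S : Finset ι}, x ∈ vanillaAux g D C θ n S → x ∈ C
  | 0, _, hx => by simp [vanillaAux] at hx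
  | n + 1, S, hx => by
    rw [vanillaAux_succ] at hx
    split_ifs at hx with _ h
    · simp at hx
    · rcases List.mem_cons.mp hx with rfl | hx
      · exact (mem_sdiff.mp (min'_bestCandidates_mem g D h)).1
      · exact mem_of_mem_vanillaAux hx
    · simp at hx

lemma vanillaAux_congr_fuel :
    ∀ {n m : ℕ} {S : Finset ι}, #(C \ S) < n → #(C \ S) < m →
      vanillaAux g D C θ n S = vanillaAux g D C θ m S
  | 0, _, _, hn, _ | _, 0, _, _, hn => absurd hn (Nat.not_lt_zero _)
  | n + 1, m + 1, S, hn, hm => by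
    simp only [vanillaAux_succ]
    split_ifs with _ h
    · rfl
    · have hu := min'_bestCandidates_mem g D h
      have hcard : #(C \ insert ((bestCandidates g D S (C \ S)).min' h) S) + 1 = #(C \ S) := by
        rw [sdiff_insert, card_erase_add_one hu]
      rw [vanillaAux_congr_fuel (n := n) (m := m) (by omega) (by omega)]
    · rfl

lemma vanillaSeq_eq_vanillaAux {n : ℕ} (hn : #C < n) :
    vanillaSeq g D C θ = vanillaAux g D C θ n ∅ :=
  vanillaAux_congr_fuel g D C θ (by simp) (by simpa using hn)

lemma vanillaAux_erase_eq {α : ι} (hα : α ∈ C) (hθ : θ ≤ g (C.erase α)) :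
    ∀ {n : ℕ} {S : Finset ι}, S ⊆ C.erase α →
      RatioAboveAlong g D α S (vanillaAux g D (C.erase α) θ n S) →
      vanillaAux g D C θ n S = vanillaAux g D (C.erase α) θ n S
  | 0, _, _, _ => rfl
  | n + 1, S, hS, habove => by
    by_cases hgS : θ ≤ g S
    · simp only [vanillaAux_succ, if_pos hgS]
    have hαS : α ∉ S := fun h => (mem_erase.mp (hS h)).1 rfl
    have hB : (bestCandidates g D S (C.erase α \ S)).Nonempty := by
      refine bestCandidates_nonempty g D (sdiff_nonempty.mpr fun hsub => hgS ?_)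
      rwa [← Subset.antisymm hsub hS]
    set u := (bestCandidates g D S (C.erase α \ S)).min' hB
    have hu : u ∈ C.erase α \ S := min'_bestCandidates_mem g D hB
    have hstep : vanillaAux g D (C.erase α) θ (n + 1) S =
        u :: vanillaAux g D (C.erase α) θ n (insert u S) := by
      simp only [vanillaAux_succ, if_neg hgS, dif_pos hB]; rfl
    rw [hstep] at habove ⊢
    obtain ⟨hlt, hrest⟩ := habove
    have hcand : C \ S = insert α (C.erase α \ S) := by
      rw [erase_sdiff_comm, insert_erase (mem_sdiff.mpr ⟨hα, hαS⟩)]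
    have hbest : bestCandidates g D S (C \ S) = bestCandidates g D S (C.erase α \ S) := by
      rw [hcand, bestCandidates_insert_of_lt g D hu hlt]
    have hstepC : vanillaAux g D C θ (n + 1) S = u :: vanillaAux g D C θ n (insert u S) := by
      simp only [vanillaAux_succ, if_neg hgS, hbest, dif_pos hB]; rfl
    rw [hstepC, vanillaAux_erase_eq hα hθ (insert_subset (mem_sdiff.mp hu).1 hS) hrest]

end

theorem vanilla_not_selected_above_critical_general [LinearOrder ι]
    (Stilde : Finset ι) (g : Finset ι → ℝ) (D : ι → ℝ)
    (α : ι) (hα : α ∈ Stilde) (θ : ℝ)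
    (hθ : θ ≤ g (Stilde.erase α))
    (hdominated : ∀ (k : ℕ) (hk : k < (vanillaSeq g D (Stilde.erase α) θ).length),
      marginalRatio g D ((vanillaSeq g D (Stilde.erase α) θ).take k).toFinset α <
        marginalRatio g D ((vanillaSeq g D (Stilde.erase α) θ).take k).toFinset
          ((vanillaSeq g D (Stilde.erase α) θ).get ⟨k, hk⟩)) :
    vanillaSeq g D Stilde θ = vanillaSeq g D (Stilde.erase α) θ ∧
      α ∉ vanillaSeq g D Stilde θ := by
  have hseq : vanillaSeq g D (Stilde.erase α) θ =
      vanillaAux g D (Stilde.erase α) θ (#Stilde + 1) ∅ :=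
    vanillaSeq_eq_vanillaAux g D _ θ (card_erase_le.trans_lt (Nat.lt_succ_self _))
  have habove : RatioAboveAlong g D α ∅ (vanillaSeq g D (Stilde.erase α) θ) :=
    ratioAboveAlong_of_forall_take g D (by simpa only [union_empty] using hdominated)
  have hsame : vanillaSeq g D Stilde θ = vanillaSeq g D (Stilde.erase α) θ := by
    rw [vanillaSeq, hseq]
    rw [hseq] at habove
    exact vanillaAux_erase_eq g D Stilde θ hα hθ (empty_subset _) habove
  refine ⟨hsame, fun hmem => ?_⟩
  rw [hsame] at hmem
  exact (mem_erase.mp (mem_of_mem_vanillaAux g D _ θ hmem)).1 rfl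

/-- Claim used to verify the critical value formula for Algorithm 3: let
`(i_1, …, i_K)` be the sequence selected by the vanilla greedy incentive search on the
candidate set `S̃ \ {α}`, with prefix sets `S'_k = {i_1, …, i_k}`.  If for every
`k ∈ {1, …, K}` the ratio of `α` at `S'_{k−1}` is strictly below that of `i_k`, then
Algorithm 3 run on the full candidate set `S̃` selects exactly the same sequence; in
particular, `α` is not selected. -/
theorem vanilla_not_selected_above_critical [LinearOrder ι]
    (Stilde : Finset ι) (g : Finset ι → ℝ) (D : ι → ℝ)
    (hD : ∀ i ∈ Stilde, 0 < D i) (α : ι) (hα : α ∈ Stilde) (θ : ℝ)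
    (hθ : θ ≤ g (Stilde.erase α))
    (hdominated : ∀ (k : ℕ) (hk : k < (vanillaSeq g D (Stilde.erase α) θ).length),
      marginalRatio g D ((vanillaSeq g D (Stilde.erase α) θ).take k).toFinset α <
        marginalRatio g D ((vanillaSeq g D (Stilde.erase α) θ).take k).toFinset
          ((vanillaSeq g D (Stilde.erase α) θ).get ⟨k, hk⟩)) :
    vanillaSeq g D Stilde θ = vanillaSeq g D (Stilde.erase α) θ ∧
      α ∉ vanillaSeq g D Stilde θ :=
  vanilla_not_selected_above_critical_general Stilde g D α hα θ hθ hdominated
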